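/- Let N ≥ 2 be an integer, ζ = exp(2πi/N), and let p : ℂ → ℂ be the polynomial p(z) = Σ_{j=0}^{N−1} z^j. Then p(1) = N ≠ 0 and for every integer n ≥ 1, Σ_{l=1}^{N−1} 1/(ζ^l − 1)^n = −(1/(n−1)!) · D^{(n−1)}(z ↦ p'(z)/p(z))(1), where D^{(n−1)} denotes the (n−1)-st iterated derivative of the function z ↦ p'(z)/p(z) evaluated at z = 1. -/

import Mathlib

open Real Finset Polynomial
open scoped Topology

/-!
Over `ℂ`, `p(z) = ∑_{j<N} z^j = ∏_{l=1}^{N-1} (z - ζ^l)`, so near `z = 1` the logarithmic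
derivative `p'/p` is `∑_l (z - ζ^l)⁻¹`. Differentiating `n - 1` times gives
`(-1)^(n-1) (n-1)! ∑_l (z - ζ^l)^(-n)`, and at `z = 1` this is `-(n-1)! S_{n,0}`.
-/

theorem IsPrimitiveRoot.geom_sum_eq_prod_sub {R : Type*} [CommRing R] [IsDomain R] {n : ℕ}
    {μ : R} (hμ : IsPrimitiveRoot μ n) (hn : n ≠ 0) (z : R) :
    ∑ j ∈ range n, z ^ j = ∏ l ∈ Ico 1 n, (z - μ ^ l) := by
  have hX : (X ^ n - C 1 : R[X]) = (X - C 1) * ∏ l ∈ Ico 1 n, (X - C (μ ^ l)) := by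
    rw [X_pow_sub_C_eq_prod hμ (Nat.pos_of_ne_zero hn) (one_pow n), range_eq_Ico,
      prod_eq_prod_Ico_succ_bot (Nat.pos_of_ne_zero hn)]
    simp
  rw [C_1, ← mul_geom_sum] at hX
  have := congrArg (eval z) (mul_left_cancel₀ (X_sub_C_ne_zero 1) hX)
  simpa [eval_prod, eval_geom_sum] using this

section LogDeriv

variable {𝕜 : Type*} [NontriviallyNormedField 𝕜]

theorem iteratedDeriv_inv_sub_const (k : ℕ) (a z : 𝕜) :
    iteratedDeriv k (fun w => (w - a)⁻¹) z = (-1) ^ k * k.factorial * ((z - a) ^ (k + 1))⁻¹ := by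
  simp only [iteratedDeriv_comp_sub_const k Inv.inv a, iteratedDeriv_eq_iterate, iter_deriv_inv]
  rw [show (-1 - k : ℤ) = -((k + 1 : ℕ) : ℤ) by push_cast; ring, zpow_neg, zpow_natCast]

theorem logDeriv_prod_sub {ι : Type*} {s : Finset ι} {a : ι → 𝕜} {z : 𝕜}
    (hz : ∀ i ∈ s, z ≠ a i) :
    logDeriv (fun w => ∏ i ∈ s, (w - a i)) z = ∑ i ∈ s, (z - a i)⁻¹ := by
  rw [logDeriv_prod (fun i hi => sub_ne_zero.mpr (hz i hi)) (fun i _ => by fun_prop)]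
  refine sum_congr rfl fun i _ => ?_
  simp [logDeriv_apply]

theorem iteratedDeriv_logDeriv_prod_sub {ι : Type*} {s : Finset ι} {a : ι → 𝕜} {z : 𝕜}
    (hz : ∀ i ∈ s, z ≠ a i) (k : ℕ) :
    iteratedDeriv k (logDeriv fun w => ∏ i ∈ s, (w - a i)) z =
      (-1) ^ k * k.factorial * ∑ i ∈ s, ((z - a i) ^ (k + 1))⁻¹ := by
  have hnear : ∀ᶠ w in 𝓝 z, ∀ i ∈ s, w ≠ a i :=
    (Filter.eventually_all_finset s).mpr fun i hi => eventually_ne_nhds (hz i hi)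
  have heq : (logDeriv fun w => ∏ i ∈ s, (w - a i)) =ᶠ[𝓝 z] fun w => ∑ i ∈ s, (w - a i)⁻¹ :=
    hnear.mono fun w hw => logDeriv_prod_sub hw
  rw [heq.iteratedDeriv_eq, iteratedDeriv_fun_sum, mul_sum]
  · simp only [iteratedDeriv_inv_sub_const]
  · exact fun i hi => (contDiffAt_id.sub contDiffAt_const).inv (sub_ne_zero.mpr (hz i hi))

end LogDeriv

theorem Snzero_via_log_derivative (N : ℕ) (hN : 2 ≤ N) :
    (∑ j ∈ Finset.range N, (1 : ℂ) ^ j) = (N : ℂ) ∧ (N : ℂ) ≠ 0 ∧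
    ∀ n : ℕ, 1 ≤ n →
      (∑ l ∈ Finset.Ico 1 N,
          (1 : ℂ) / ((Complex.exp (2 * π * Complex.I / N)) ^ l - 1) ^ n) =
        -((1 : ℂ) / (Nat.factorial (n - 1) : ℂ)) *
          iteratedDeriv (n - 1)
            (fun z : ℂ =>
              deriv (fun w : ℂ => ∑ j ∈ Finset.range N, w ^ j) z /
                (∑ j ∈ Finset.range N, z ^ j)) 1 := by
  have hN0 : N ≠ 0 := by omega
  set ζ : ℂ := Complex.exp (2 * π * Complex.I / N)
  have hζ : IsPrimitiveRoot ζ N := Complex.isPrimitiveRoot_exp N hN0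
  refine ⟨by simp, Nat.cast_ne_zero.mpr hN0, fun n hn => ?_⟩
  obtain ⟨k, rfl⟩ : ∃ k, n = k + 1 := ⟨n - 1, by omega⟩
  have hroots : ∀ l ∈ Ico 1 N, (1 : ℂ) ≠ ζ ^ l := fun l hl =>
    (hζ.pow_ne_one_of_pos_of_lt (Nat.one_le_iff_ne_zero.mp (mem_Ico.mp hl).1) (mem_Ico.mp hl).2).symm
  change _ = _ * iteratedDeriv _ (logDeriv fun w => ∑ j ∈ range N, w ^ j) 1
  simp_rw [hζ.geom_sum_eq_prod_sub hN0, Nat.add_sub_cancel,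
    iteratedDeriv_logDeriv_prod_sub hroots k, mul_sum]
  refine sum_congr rfl fun l _ => ?_
  have hfac : (k.factorial : ℂ) ≠ 0 := Nat.cast_ne_zero.mpr k.factorial_ne_zero
  rw [← neg_sub, one_div, neg_pow, mul_inv, ← inv_pow, inv_neg, inv_one]
  field_simp
  ring
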